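/- Consider the root system of type B_n (n ≥ 3): V = ℚⁿ, Φ = {±e_i, ±(e_i − e_j), ±(e_i + e_j) : 1 ≤ i < j ≤ n}, base Δ = {e_1−e_2, …, e_{n−1}−e_n, e_n}, highest root e_1 + e_2. For every i with 1 < i < n, the long simple root e_i − e_{i+1} is not W_{e_i−e_{i+1}}-conjugate to the highest root e_1 + e_2. -/
import Mathlib


open scoped BigOperators

/-- the `k`-th standard basis vector of `ℚⁿ` -/
noncomputable def stdE {n : ℕ} (k : Fin n) : Fin n → ℚ := Pi.single k 1

/-- the standard dot product on `ℚⁿ`, as a bilinear form -/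
noncomputable def dotForm (n : ℕ) : (Fin n → ℚ) →ₗ[ℚ] (Fin n → ℚ) →ₗ[ℚ] ℚ :=
  LinearMap.mk₂ ℚ (fun u v => ∑ i, u i * v i)
    (by intros m m' v; simp [add_mul, Finset.sum_add_distrib])
    (by intros c m v; simp [Finset.mul_sum, mul_assoc])
    (by intros m v v'; simp [mul_add, Finset.sum_add_distrib])
    (by intros c m v; simp [Finset.mul_sum]; ring_nf; simp [mul_comm, mul_left_comm])

/-- the orthogonal reflection of `ℚⁿ` in the vector `γ` (junk value `id` when `γ = 0`) -/
noncomputable def sRefl {n : ℕ} (γ : Fin n → ℚ) : (Fin n → ℚ) ≃ₗ[ℚ] (Fin n → ℚ) :=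
  if h : dotForm n γ γ ≠ 0 then
    Module.reflection (x := γ) (f := (2 / dotForm n γ γ) • dotForm n γ)
      (by simp only [LinearMap.smul_apply, smul_eq_mul]; field_simp)
  else LinearEquiv.refl ℚ _

/-- sum of the first `k+1` coordinates, a linear functional invariant under `W_α` -/
noncomputable def fsum (n k : ℕ) : (Fin n → ℚ) →ₗ[ℚ] ℚ :=
  ∑ i ∈ Finset.univ.filter (fun i : Fin n => (i : ℕ) ≤ k), LinearMap.proj i

lemma fsum_apply (n k : ℕ) (v : Fin n → ℚ) :
    fsum n k v = ∑ i ∈ Finset.univ.filter (fun i : Fin n => (i : ℕ) ≤ k), v i := by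
  simp [fsum]

lemma fsum_stdE (n k : ℕ) (m : Fin n) :
    fsum n k (stdE m) = if (m : ℕ) ≤ k then 1 else 0 := by
  rw [fsum_apply]
  simp only [stdE, Pi.single_apply]
  rw [Finset.sum_ite_eq']
  simp

lemma fsum_sRefl {n : ℕ} (k : ℕ) (γ : Fin n → ℚ) (hγ : fsum n k γ = 0) (v : Fin n → ℚ) :
    fsum n k (sRefl γ v) = fsum n k v := by
  by_cases h : dotForm n γ γ ≠ 0
  · rw [sRefl, dif_pos h, Module.reflection_apply, map_sub, map_smul, hγ, smul_eq_mul,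
      mul_zero, sub_zero]
  · rw [sRefl, dif_neg h]; rfl

/-- **Type `B_n` internal simple roots.** For `n ≥ 3` and an internal long simple root
`α = e_k − e_{k+1}` (`0`-indexed: `1 ≤ k ≤ n − 2`) of the base
`Δ = {e_0−e_1, …, e_{n−2}−e_{n−1}, e_{n−1}}` of `B_n`, no element `w` of the subgroup
`W_α` generated by the simple reflections in `Δ \ {α}` satisfies `w α = e_0 + e_1`
(the highest root). -/
theorem typeB_internal_not_leviConjugate_highestRoot
    (n : ℕ) (hn : 3 ≤ n) (k : ℕ) (hk1 : 1 ≤ k) (hk : k + 1 < n) :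
    ¬ ∃ w ∈ Subgroup.closure
        ({g : (Fin n → ℚ) ≃ₗ[ℚ] (Fin n → ℚ) |
            ∃ j : ℕ, ∃ hj : j + 1 < n, j ≠ k ∧
              g = sRefl (stdE ⟨j, by omega⟩ - stdE ⟨j + 1, hj⟩)} ∪
          {sRefl (stdE ⟨n - 1, by omega⟩)}),
      w (stdE ⟨k, by omega⟩ - stdE ⟨k + 1, hk⟩) =
        stdE ⟨0, by omega⟩ + stdE ⟨1, by omega⟩ := by
  rintro ⟨w, hw, hα⟩
  set f := fsum n k with hf
  -- the subgroup of linear equivalences preserving `f`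
  let H : Subgroup ((Fin n → ℚ) ≃ₗ[ℚ] (Fin n → ℚ)) :=
  { carrier := {g | ∀ v, f (g v) = f v}
    one_mem' := by intro v; rfl
    mul_mem' := by
      intro a b ha hb v
      have : (a * b) v = a (b v) := rfl
      rw [this, ha, hb]
    inv_mem' := by
      intro a ha v
      have h1 : a (a⁻¹ v) = v := by
        have : a⁻¹ v = a.symm v := rfl
        rw [this, LinearEquiv.apply_symm_apply]
      calc f (a⁻¹ v) = f (a (a⁻¹ v)) := (ha _).symm
        _ = f v := by rw [h1] }
  have hsub : Subgroup.closure
      ({g : (Fin n → ℚ) ≃ₗ[ℚ] (Fin n → ℚ) |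
            ∃ j : ℕ, ∃ hj : j + 1 < n, j ≠ k ∧
              g = sRefl (stdE ⟨j, by omega⟩ - stdE ⟨j + 1, hj⟩)} ∪
          {sRefl (stdE ⟨n - 1, by omega⟩)}) ≤ H := by
    rw [Subgroup.closure_le]
    rintro g (⟨j, hj, hjk, rfl⟩ | rfl)
    · intro v
      refine fsum_sRefl k _ ?_ v
      rw [map_sub, fsum_stdE, fsum_stdE]
      simp only
      split_ifs with h1 h2 h2
      · ring
      · exfalso; omega
      · exfalso; omega
      · ring
    · intro v
      refine fsum_sRefl k _ ?_ v
      rw [fsum_stdE]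
      simp only
      rw [if_neg (by omega)]
  have hwH : ∀ v, f (w v) = f v := hsub hw
  have h1 := hwH (stdE ⟨k, by omega⟩ - stdE ⟨k + 1, hk⟩)
  rw [hα] at h1
  rw [map_add, map_sub, fsum_stdE, fsum_stdE, fsum_stdE, fsum_stdE] at h1
  simp only at h1
  rw [if_pos (by omega : (0:ℕ) ≤ k), if_pos (by omega : (1:ℕ) ≤ k),
    if_pos (le_refl k), if_neg (by omega : ¬ k + 1 ≤ k)] at h1
  norm_num at h1
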